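/- arXiv:2102.09834 — 8 statements merged into one kernel-verified Lean document; each statement's English description precedes it below -/
import Mathlib

section
/- The group ℤ/2 is proto-complete but not complete: every embedding of ℤ/2 as the kernel of a split group epimorphism splits, but the canonical embedding ℤ/2 → ℤ/4 is a normal monomorphism that is not a split monomorphism. -/
/-- An additive group `G` is proto-complete if every monomorphism with domain `G`
which is the kernel of a split epimorphism is a split monomorphism. -/
def IsProtoCompleteAdd (G : Type) [AddGroup G] : Prop :=
  ∀ (A B : Type) [AddGroup A] [AddGroup B] (κ : G →+ A) (α : A →+ B) (β : B →+ A),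
    Function.Injective κ → α.comp β = AddMonoidHom.id B → κ.range = α.ker →
    ∃ r : A →+ G, r.comp κ = AddMonoidHom.id G

/-- `ℤ/2` is proto-complete but not complete: the canonical embedding
`ℤ/2 → ℤ/4` (sending `1` to `2`) is a normal monomorphism which is not split. -/
theorem stmt_5 :
    IsProtoCompleteAdd (ZMod 2) ∧
    ∃ i : ZMod 2 →+ ZMod 4, i 1 = 2 ∧ Function.Injective i ∧
      (AddMonoidHom.range i).Normal ∧
      ¬ ∃ r : ZMod 4 →+ ZMod 2, r.comp i = AddMonoidHom.id (ZMod 2) := by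
  constructor
  · -- proto-completeness
    intro A B _ _ κ α β hκ hαβ hrange
    classical
    have hβα : ∀ b, α (β b) = b := fun b => DFunLike.congr_fun hαβ b
    have hker : ∀ g : ZMod 2, α (κ g) = 0 := by
      intro g
      have : κ g ∈ α.ker := hrange ▸ ⟨g, rfl⟩
      exact this
    set n : A → A := fun a => a - β (α a) with hn
    have hnker : ∀ a, α (n a) = 0 := by
      intro a; simp [hn, map_sub, hβα]
    have hnrange : ∀ a, ∃ g, κ g = n a := by
      intro a
      have h : n a ∈ α.ker := hnker a
      rw [← hrange] at h
      exact h
    have h01 : ∀ d : ZMod 2, d ≠ 0 → d = 1 := by decide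
    -- the image of κ is central
    have hc : ∀ (g : ZMod 2) (x : A), x + κ g - x = κ g := by
      intro g x
      have hmem : x + κ g - x ∈ α.ker := by
        simp [AddMonoidHom.mem_ker, map_sub, hker g]
      rw [← hrange] at hmem
      obtain ⟨c, hc⟩ := hmem
      rcases (by decide : ∀ d : ZMod 2, d = 0 ∨ d = 1) g with hg | hg
      · simp [hg]
      · subst hg
        have hc0 : c ≠ 0 := by
          intro h0
          rw [h0, map_zero] at hc
          have h2 : x + κ 1 = x := sub_eq_zero.mp hc.symm
          have h3 : κ (1 : ZMod 2) = 0 := by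
            have := add_eq_left.mp h2
            exact this
          exact hκ.ne (by decide : (1 : ZMod 2) ≠ 0) (by simpa using h3)
        rw [h01 c hc0] at hc
        exact hc.symm
    have hcomm : ∀ (g : ZMod 2) (x : A), κ g + x = x + κ g := by
      intro g x
      have h := hc g x
      have := sub_eq_iff_eq_add.mp h
      exact this.symm
    have hnadd : ∀ a b, n (a + b) = n a + n b := by
      intro a b
      obtain ⟨g, hg⟩ := hnrange b
      have key : n (a + b) = n b + n a := by
        calc n (a + b) = a + b + (-(β (α b)) + -(β (α a))) := by
              simp only [hn, map_add, sub_eq_add_neg, neg_add_rev]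
          _ = a + (b + -(β (α b))) + -(β (α a)) := by
              simp only [add_assoc]
          _ = a + n b + -(β (α a)) := by simp only [hn, sub_eq_add_neg]
          _ = n b + a + -(β (α a)) := by rw [← hg, hcomm g a]
          _ = n b + (a + -(β (α a))) := by rw [add_assoc]
          _ = n b + n a := by simp only [hn, sub_eq_add_neg]
      rw [key, ← hg]
      exact hcomm g (n a)
    -- retraction
    set r0 : A → ZMod 2 := fun a => if n a = 0 then 0 else 1 with hr0
    have hκr0 : ∀ a, κ (r0 a) = n a := by
      intro a
      by_cases h : n a = 0
      · simp [hr0, h]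
      · obtain ⟨g, hg⟩ := hnrange a
        have hg0 : g ≠ 0 := by
          intro h0; rw [h0, map_zero] at hg; exact h hg.symm
        rw [hr0]
        simp only [h, if_neg h]
        rw [← h01 g hg0]
        exact hg
    have hr0add : ∀ a b, r0 (a + b) = r0 a + r0 b := by
      intro a b
      apply hκ
      rw [map_add, hκr0, hκr0, hκr0, hnadd]
    have hr0zero : r0 0 = 0 := by
      apply hκ
      rw [map_zero, hκr0]
      simp [hn]
    refine ⟨{ toFun := r0, map_zero' := hr0zero, map_add' := hr0add }, ?_⟩
    ext g
    show r0 (κ g) = g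
    apply hκ
    rw [hκr0]
    simp [hn, hker g]
  · -- ZMod 2 is not complete
    refine ⟨{ toFun := fun x => if x = 0 then 0 else 2,
              map_zero' := by decide, map_add' := by decide },
      by decide, by decide, inferInstance, ?_⟩
    rintro ⟨r, hr⟩
    have h1 : r 2 = 1 := by
      have := DFunLike.congr_fun hr 1
      simpa using this
    have h2 : r 2 = r 1 + r 1 := by
      rw [← map_add]
      norm_num
    have h3 : ∀ d : ZMod 2, d + d = 0 := by decide
    rw [h2, h3] at h1
    exact (by decide : (0 : ZMod 2) ≠ 1) h1
end

section
/- There are no nontrivial abelian complete groups: if A is a nontrivial abelian group, then there exists a group Y and a normal embedding A → Y which does not split. -/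
/-!
If `r` retracts a normal embedding `i` of an abelian group `A`, then applying `r` to
`y + i a - y = i b` gives `a = b`: conjugation in the big group must fix `i A` pointwise.
So if some `a` has `a ≠ -a`, embed `A` into `A ⋊ ℤ`, where the generator of `ℤ` acts by
negation. Otherwise `A` has exponent 2; pick `a ≠ 0` and glue `ℤ/4` to `A` along
`2 ↦ a`. There the image of `a` is a double, whereas in `A` every double vanishes.
-/

namespace AddMonoidHom

theorem eq_of_add_conj_eq_of_comp_eq_id {A Y : Type*} [AddCommGroup A] [AddGroup Y]
    {i : A →+ Y} {r : Y →+ A} (hr : r.comp i = .id A) {y : Y} {a b : A}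
    (h : y + i a + -y = i b) : a = b := by
  have hri (x : A) : r (i x) = x := DFunLike.congr_fun hr x
  simpa [hri, add_neg_cancel_comm] using congrArg r h

theorem add_self_eq_of_comp_eq_id {A Y : Type*} [AddGroup A] [AddGroup Y]
    {i : A →+ Y} {r : Y →+ A} (hr : r.comp i = .id A) {u : Y} {a : A}
    (h : u + u = i a) : r u + r u = a := by
  rw [← map_add, h]
  exact DFunLike.congr_fun hr a

end AddMonoidHom

section NegSemidirectProduct

variable (A : Type*) [AddCommGroup A]

noncomputable def negAut : Multiplicative ℤ →* MulAut (Multiplicative A) :=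
  zpowersHom _ (MulEquiv.inv (Multiplicative A))

abbrev NegSemidirectProduct := Additive (Multiplicative A ⋊[negAut A] Multiplicative ℤ)

namespace NegSemidirectProduct

noncomputable def inl : A →+ NegSemidirectProduct A :=
  MonoidHom.toAdditiveRight SemidirectProduct.inl

theorem inl_injective : Function.Injective (inl A) := fun _ _ h =>
  SemidirectProduct.inl_injective (φ := negAut A) h

theorem range_inl_eq_ker :
    (inl A).range = (MonoidHom.toAdditive SemidirectProduct.rightHom :
      NegSemidirectProduct A →+ ℤ).ker := by
  ext x
  exact SetLike.ext_iff.mp SemidirectProduct.range_inl_eq_ker_rightHom (Additive.toMul x)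

theorem range_inl_normal : (inl A).range.Normal := by
  rw [range_inl_eq_ker]
  infer_instance

noncomputable def generator : NegSemidirectProduct A :=
  Additive.ofMul (SemidirectProduct.inr (Multiplicative.ofAdd 1))

theorem generator_add_inl_add_neg (a : A) :
    generator A + inl A a + -generator A = inl A (-a) := by
  show SemidirectProduct.inr _ * SemidirectProduct.inl _ * (SemidirectProduct.inr _)⁻¹ = _
  rw [← map_inv, ← SemidirectProduct.inl_aut]
  rfl

end NegSemidirectProduct

end NegSemidirectProduct

section ZMod4Pushout

variable {A : Type*} [AddCommGroup A]

abbrev ZMod4Pushout (a : A) := (ZMod 4 × A) ⧸ AddSubgroup.zmultiples ((2 : ZMod 4), a)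

namespace ZMod4Pushout

def inr (a : A) : A →+ ZMod4Pushout a :=
  (QuotientAddGroup.mk' _).comp (AddMonoidHom.inr (ZMod 4) A)

theorem inr_injective {a : A} (ha : a + a = 0) : Function.Injective (inr a) := by
  rw [injective_iff_map_eq_zero]
  intro x hx
  obtain ⟨n, hn⟩ := AddSubgroup.mem_zmultiples_iff.mp ((QuotientAddGroup.eq_zero_iff _).mp hx)
  obtain ⟨h4, rfl⟩ := Prod.ext_iff.mp hn
  obtain ⟨m, rfl | rfl⟩ := n.even_or_odd'
  · simp [mul_zsmul', two_zsmul, ha]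
  · have : ∀ k : ZMod 4, (2 * k + 1) * 2 ≠ 0 := by decide
    exact absurd (by simpa using h4) (this m)

def half (a : A) : ZMod4Pushout a := QuotientAddGroup.mk ((1 : ZMod 4), (0 : A))

theorem half_add_half (a : A) : half a + half a = inr a a := by
  rw [half, ← QuotientAddGroup.mk_add, inr, AddMonoidHom.comp_apply, QuotientAddGroup.mk'_apply,
    QuotientAddGroup.eq_iff_sub_mem]
  convert neg_mem (AddSubgroup.mem_zmultiples ((2 : ZMod 4), a)) using 1
  ext
  · simp only [Prod.fst_sub, Prod.fst_add, AddMonoidHom.inr_apply, Prod.fst_neg]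
    decide
  · simp

end ZMod4Pushout

end ZMod4Pushout

/-- There are no nontrivial abelian complete groups: if `A` is a nontrivial
abelian group then it is not the case that every normal embedding of `A`
into a group splits. -/
theorem stmt_6 (A : Type) [AddCommGroup A] [Nontrivial A] :
    ¬ (∀ (Y : Type) [AddGroup Y] (i : A →+ Y), Function.Injective i →
        (AddMonoidHom.range i).Normal →
        ∃ r : Y →+ A, r.comp i = AddMonoidHom.id A) := by
  intro hsplit
  by_cases hexp : ∀ x : A, x + x = 0
  · obtain ⟨a, ha⟩ := exists_ne (0 : A)
    obtain ⟨r, hr⟩ := hsplit _ (ZMod4Pushout.inr a) (ZMod4Pushout.inr_injective (hexp a))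
      inferInstance
    have hdouble := AddMonoidHom.add_self_eq_of_comp_eq_id hr (ZMod4Pushout.half_add_half a)
    exact ha (hdouble.symm.trans (hexp _))
  · obtain ⟨a, ha⟩ := not_forall.mp hexp
    obtain ⟨r, hr⟩ := hsplit _ (NegSemidirectProduct.inl A)
      (NegSemidirectProduct.inl_injective A) (NegSemidirectProduct.range_inl_normal A)
    have hneg := AddMonoidHom.eq_of_add_conj_eq_of_comp_eq_id hr
      (NegSemidirectProduct.generator_add_inl_add_neg A a)
    exact ha (neg_eq_iff_add_eq_zero.mp hneg.symm)
end

section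
/- Baer's theorem: a group G has the property that every normal embedding of G splits if and only if G has trivial center and every automorphism of G is inner (i.e., the conjugation homomorphism c_G : G → Aut(G) is an isomorphism). -/
/-! Suppose every normal embedding of `G` splits. For a central `a`, glue `G` to the discrete
Heisenberg group by identifying `a` with its central commutator `⁅x, y⁆` of infinite order: `G`
stays embedded, as a normal subgroup, and a retraction maps the Heisenberg group into the centre
of `G`, where commutators are trivial, so `a = 1`. A retraction of `G ↪ G ⋊ Aut G` sends each
automorphism `φ` to an element inducing `φ` by conjugation.

Conversely, if `conj : G → Aut G` is an isomorphism, a group `Y` containing `G` as a normal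
subgroup acts on `G` by conjugation, and composing this action with `conj⁻¹` is a retraction. -/

open Subgroup
open scoped commutatorElement

/-- `⟨a, b, c⟩` is the unitriangular matrix `[[1, a, c], [0, 1, b], [0, 0, 1]]`. -/
@[ext]
structure Heisenberg where
  a : ℤ
  b : ℤ
  c : ℤ

namespace Heisenberg

instance : Mul Heisenberg := ⟨fun p q => ⟨p.a + q.a, p.b + q.b, p.c + q.c + p.a * q.b⟩⟩
instance : One Heisenberg := ⟨⟨0, 0, 0⟩⟩
instance : Inv Heisenberg := ⟨fun p => ⟨-p.a, -p.b, -p.c + p.a * p.b⟩⟩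

@[simp] theorem mul_a (p q : Heisenberg) : (p * q).a = p.a + q.a := rfl
@[simp] theorem mul_b (p q : Heisenberg) : (p * q).b = p.b + q.b := rfl
@[simp] theorem mul_c (p q : Heisenberg) : (p * q).c = p.c + q.c + p.a * q.b := rfl
@[simp] theorem one_a : (1 : Heisenberg).a = 0 := rfl
@[simp] theorem one_b : (1 : Heisenberg).b = 0 := rfl
@[simp] theorem one_c : (1 : Heisenberg).c = 0 := rfl
@[simp] theorem inv_a (p : Heisenberg) : p⁻¹.a = -p.a := rfl
@[simp] theorem inv_b (p : Heisenberg) : p⁻¹.b = -p.b := rfl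
@[simp] theorem inv_c (p : Heisenberg) : p⁻¹.c = -p.c + p.a * p.b := rfl

instance : Group Heisenberg where
  mul_assoc p q r := by ext <;> simp only [mul_a, mul_b, mul_c] <;> ring
  one_mul p := by ext <;> simp
  mul_one p := by ext <;> simp
  inv_mul_cancel p := by
    ext <;> simp only [mul_a, mul_b, mul_c, inv_a, inv_b, inv_c, one_a, one_b, one_c] <;> ring

def x : Heisenberg := ⟨1, 0, 0⟩
def y : Heisenberg := ⟨0, 1, 0⟩

theorem commutatorElement_x_y : ⁅x, y⁆ = ⟨0, 0, 1⟩ := by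
  ext <;> simp [commutatorElement_def, x, y]

theorem commutatorElement_x_y_mem_center : ⁅x, y⁆ ∈ center Heisenberg := by
  refine mem_center_iff.mpr fun p => ?_
  ext <;> simp [commutatorElement_x_y, add_comm]

theorem pow_commutatorElement_x_y (n : ℕ) : ⁅x, y⁆ ^ n = ⟨0, 0, n⟩ := by
  induction n with
  | zero => rfl
  | succ n ih =>
    rw [pow_succ, ih, commutatorElement_x_y]
    ext <;> simp

theorem not_isOfFinOrder_commutatorElement_x_y : ¬IsOfFinOrder ⁅x, y⁆ :=
  not_isOfFinOrder_of_injective_pow fun m n h => by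
    simpa [pow_commutatorElement_x_y] using congrArg c h

end Heisenberg

theorem Subgroup.normal_of_le_center {G : Type*} [Group G] {N : Subgroup G} (h : N ≤ center G) :
    N.Normal :=
  ⟨fun n hn g => by rw [(mem_center_iff.mp (h hn) g), mul_inv_cancel_right]; exact hn⟩

abbrev CentralAmalgam {G H : Type*} [Group G] [Group H] (a : G) (z : H) : Type _ :=
  (G × H) ⧸ normalClosure {(a⁻¹, z)}

namespace CentralAmalgam

variable {G H : Type*} [Group G] [Group H] {a : G} {z : H}

variable (a z) in
def inl : G →* CentralAmalgam a z := (QuotientGroup.mk' _).comp (MonoidHom.inl G H)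

variable (a z) in
def inr : H →* CentralAmalgam a z := (QuotientGroup.mk' _).comp (MonoidHom.inr G H)

theorem commute_inl_inr (g : G) (h : H) : Commute (inl a z g) (inr a z h) :=
  (Commute.prod (Commute.one_right g) (Commute.one_left h)).map (QuotientGroup.mk' _)

theorem inl_eq_inr : inl a z a = inr a z z :=
  QuotientGroup.eq.mpr (subset_normalClosure (by simp))

theorem normal_range_inl : (inl a z).range.Normal := by
  have : (MonoidHom.inl G H).range = (MonoidHom.snd G H).ker := by
    ext ⟨g, h⟩; simp [MonoidHom.mem_range, Subgroup.mem_prod, eq_comm]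
  rw [inl, MonoidHom.range_comp, this]
  exact (MonoidHom.normal_ker _).map _ (QuotientGroup.mk'_surjective _)

theorem inl_injective (ha : a ∈ center G) (hz : z ∈ center H) (hz_ord : ¬IsOfFinOrder z) :
    Function.Injective (inl a z) := by
  -- the normal closure of the central element `(a⁻¹, z)` is cyclic, and meets `G × 1` trivially
  have hw : (a⁻¹, z) ∈ center (G × H) :=
    mem_center_iff.mpr fun p =>
      Prod.ext (mem_center_iff.mp (inv_mem ha) p.1) (mem_center_iff.mp hz p.2)
  have := normal_of_le_center (zpowers_le.mpr hw)
  refine (injective_iff_map_eq_one _).mpr fun g hg => ?_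
  obtain ⟨k, hk⟩ : (g, (1 : H)) ∈ zpowers (a⁻¹, z) :=
    normalClosure_le_normal (by simp) (QuotientGroup.eq_one_iff _ |>.mp hg)
  have hk0 : k = 0 :=
    injective_zpow_iff_not_isOfFinOrder.mpr hz_ord (by simpa using congrArg Prod.snd hk)
  simpa [hk0] using (congrArg Prod.fst hk).symm

theorem eq_one_of_retraction {x y : H} (r : CentralAmalgam a ⁅x, y⁆ →* G)
    (hr : r.comp (inl a _) = MonoidHom.id G) : a = 1 := by
  have hrl (g : G) : r (inl a _ g) = g := DFunLike.congr_fun hr g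
  have hcomm (h : H) (g : G) : Commute (r (inr a _ h)) g := by
    simpa [hrl] using ((commute_inl_inr g h).map r).symm
  calc a = r (inr a _ ⁅x, y⁆) := by rw [← inl_eq_inr, hrl]
    _ = 1 := by rw [map_commutatorElement, map_commutatorElement,
      commutatorElement_eq_one_iff_commute.mpr (hcomm _ _)]

end CentralAmalgam

theorem MulAut.conj_injective_of_center_eq_bot {G : Type*} [Group G] (h : center G = ⊥) :
    Function.Injective (MulAut.conj : G →* MulAut G) := by
  refine (injective_iff_map_eq_one _).mpr fun g hg => ?_
  have hg_center : g ∈ center G := mem_center_iff.mpr fun x =>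
    (mul_inv_eq_iff_eq_mul.mp (DFunLike.congr_fun hg x)).symm
  simpa [h] using hg_center

theorem MulAut.conj_surjective_of_retraction_holomorph {G : Type*} [Group G]
    (r : G ⋊[MonoidHom.id (MulAut G)] MulAut G →* G) (hr : r.comp SemidirectProduct.inl = .id G) :
    Function.Surjective (MulAut.conj : G →* MulAut G) := by
  have hrl (g : G) : r (SemidirectProduct.inl g) = g := DFunLike.congr_fun hr g
  refine fun φ => ⟨r (SemidirectProduct.inr φ), MulEquiv.ext fun x => ?_⟩
  -- in the holomorph, `φ` is conjugation by `inr φ`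
  have key := SemidirectProduct.inl_aut (φ := MonoidHom.id (MulAut G)) φ x
  simpa [hrl] using (congrArg r key).symm

theorem exists_retraction_of_bijective_conj {G Y : Type*} [Group G] [Group Y]
    (hc : Function.Bijective (MulAut.conj : G →* MulAut G)) (i : G →* Y)
    (hi : Function.Injective i) (hn : i.range.Normal) :
    ∃ r : Y →* G, r.comp i = MonoidHom.id G := by
  let S : GroupExtension G Y (Y ⧸ i.range) :=
    ⟨i, QuotientGroup.mk' _, hi, (QuotientGroup.ker_mk' _).symm, QuotientGroup.mk'_surjective _⟩
  let c := MulEquiv.ofBijective _ hc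
  refine ⟨c.symm.toMonoidHom.comp S.conjAct, MonoidHom.ext fun g => c.symm_apply_eq.mpr ?_⟩
  ext x
  apply hi
  calc i (S.conjAct (i g) x) = i g * i x * (i g)⁻¹ := S.inl_conjAct_comm
    _ = i (c g x) := by simp [c]

/-- Baer's theorem: a group `G` has the property that every normal embedding of
`G` splits if and only if `G` has trivial center and every automorphism of `G`
is inner, i.e. the conjugation homomorphism `c_G : G → Aut G` is an isomorphism. -/
theorem stmt_7 (G : Type) [Group G] :
    (∀ (Y : Type) [Group Y] (i : G →* Y), Function.Injective i →
        (MonoidHom.range i).Normal →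
        ∃ r : Y →* G, r.comp i = MonoidHom.id G) ↔
    (Subgroup.center G = ⊥ ∧
      Function.Bijective (MulAut.conj : G →* MulAut G)) := by
  refine ⟨fun h => ?_, fun ⟨_, hc⟩ Y _ i hi hn => exists_retraction_of_bijective_conj hc i hi hn⟩
  have hcenter : center G = ⊥ := by
    refine eq_bot_iff.mpr fun a ha => ?_
    obtain ⟨r, hr⟩ := h (CentralAmalgam a ⁅Heisenberg.x, Heisenberg.y⁆) _
      (CentralAmalgam.inl_injective ha Heisenberg.commutatorElement_x_y_mem_center
        Heisenberg.not_isOfFinOrder_commutatorElement_x_y)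
      CentralAmalgam.normal_range_inl
    exact CentralAmalgam.eq_one_of_retraction r hr
  obtain ⟨r, hr⟩ := h (G ⋊[MonoidHom.id (MulAut G)] MulAut G) _ SemidirectProduct.inl_injective
    (by rw [SemidirectProduct.range_inl_eq_ker_rightHom]; exact MonoidHom.normal_ker _)
  exact ⟨hcenter, MulAut.conj_injective_of_center_eq_bot hcenter,
    MulAut.conj_surjective_of_retraction_holomorph r hr⟩
end

section
/- If G is a characteristically simple non-abelian group, then Aut(G) is a complete group: Z(Aut(G)) = 1 and every automorphism of Aut(G) is inner. -/
/-!
Since `G` is non-abelian, its center (a characteristic subgroup) is trivial, so `G ≅ Inn(G)`,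
and an automorphism of `G` commuting with every inner one is trivial: the centralizer of `Inn(G)`
in `Aut(G)` is trivial, which gives `Z(Aut(G)) = 1`. A normal subgroup of `Aut(G)` contained in
`Inn(G)` pulls back to a characteristic subgroup of `G`, so it is `1` or `Inn(G)`. For
`φ ∈ Aut(Aut(G))`, apply this to `φ(Inn(G)) ∩ Inn(G)`: if it were trivial, the two normal
subgroups would commute elementwise, forcing `φ(Inn(G)) = 1`. Hence `φ(Inn(G)) = Inn(G)`, and
transporting `φ|Inn(G)` to `G` gives `β ∈ Aut(G)` with `φ(c_g) = c_{β g}`; comparing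
`φ(σ c_g σ⁻¹)` computed in two ways shows `φ = conj β`.
-/

def IsCharacteristicallySimple (G : Type*) [Group G] : Prop :=
  ∀ H : Subgroup G, H.Characteristic → H = ⊥ ∨ H = ⊤

theorem IsCharacteristicallySimple.center_eq_bot {G : Type*} [Group G]
    (hcs : IsCharacteristicallySimple G) (hna : ∃ a b : G, a * b ≠ b * a) :
    Subgroup.center G = ⊥ := by
  refine (hcs _ inferInstance).resolve_right fun h => ?_
  obtain ⟨a, b, hab⟩ := hna
  exact hab (Subgroup.mem_center_iff.mp (h ▸ Subgroup.mem_top a) b).symm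

namespace MulAut

local notation "Inn(" G ")" => MonoidHom.range (MulAut.conj : G →* MulAut G)

variable {G : Type*} [Group G]

theorem mul_conj_mul_inv (α : MulAut G) (g : G) : α * conj g * α⁻¹ = conj (α g) := by
  ext x
  simp [MulAut.mul_apply, MulAut.conj_apply]

theorem normal_range_conj : Inn(G).Normal where
  conj_mem := by
    rintro - ⟨g, rfl⟩ α
    exact ⟨α g, (mul_conj_mul_inv α g).symm⟩

theorem conj_injective (hZ : Subgroup.center G = ⊥) :
    Function.Injective (conj : G →* MulAut G) := by
  rw [injective_iff_map_eq_one]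
  intro g hg
  have hg : g ∈ Subgroup.center G := Subgroup.mem_center_iff.mpr fun x => by
    simpa [eq_mul_inv_iff_mul_eq] using (DFunLike.congr_fun hg x).symm
  rwa [hZ, Subgroup.mem_bot] at hg

theorem range_conj_ne_bot {a b : G} (hab : a * b ≠ b * a) : Inn(G) ≠ ⊥ := by
  intro h
  have : conj a = 1 := by
    simpa only [h, Subgroup.mem_bot] using (conj : G →* MulAut G).mem_range.mpr ⟨a, rfl⟩
  exact hab (by simpa [mul_inv_eq_iff_eq_mul] using DFunLike.congr_fun this b)

theorem eq_one_of_forall_commute_conj (hinj : Function.Injective (conj : G →* MulAut G))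
    {α : MulAut G} (hα : ∀ g, Commute α (conj g)) : α = 1 := by
  ext g
  apply hinj
  rw [← mul_conj_mul_inv, (hα g).eq, mul_inv_cancel_right]
  rfl

theorem center_eq_bot_of_conj_injective (hinj : Function.Injective (conj : G →* MulAut G)) :
    Subgroup.center (MulAut G) = ⊥ :=
  eq_bot_iff.mpr fun _ hα => eq_one_of_forall_commute_conj hinj fun g =>
    (Subgroup.mem_center_iff.mp hα (conj g)).symm

theorem characteristic_comap_conj {N : Subgroup (MulAut G)} (hN : N.Normal) :
    (N.comap conj).Characteristic := by
  refine Subgroup.characteristic_iff_le_comap.mpr fun σ g hg => ?_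
  show conj (σ g) ∈ N
  rw [← mul_conj_mul_inv]
  exact hN.conj_mem _ hg σ

theorem eq_bot_or_eq_range_conj (hcs : IsCharacteristicallySimple G)
    {N : Subgroup (MulAut G)} (hN : N.Normal) (hle : N ≤ Inn(G)) : N = ⊥ ∨ N = Inn(G) := by
  have hN' : N = (N.comap conj).map conj := by
    rw [Subgroup.map_comap_eq, inf_eq_right.mpr hle]
  rcases hcs _ (characteristic_comap_conj hN) with h | h <;> rw [hN', h]
  · exact .inl (Subgroup.map_bot _)
  · exact .inr (MonoidHom.range_eq_map _).symm

theorem range_conj_le_map (hcs : IsCharacteristicallySimple G)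
    (hinj : Function.Injective (conj : G →* MulAut G)) (hne : Inn(G) ≠ ⊥)
    (φ : MulAut (MulAut G)) : Inn(G) ≤ Inn(G).map φ.toMonoidHom := by
  have hI : Inn(G).Normal := normal_range_conj
  have hM : (Inn(G).map φ.toMonoidHom).Normal := hI.map _ φ.surjective
  rcases eq_bot_or_eq_range_conj hcs inferInstance
    (inf_le_right : Inn(G).map φ.toMonoidHom ⊓ Inn(G) ≤ Inn(G)) with h | h
  · have hM_bot : Inn(G).map φ.toMonoidHom = ⊥ := eq_bot_iff.mpr fun m hm =>
      Subgroup.mem_bot.mpr <| eq_one_of_forall_commute_conj hinj fun g =>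
        Subgroup.commute_of_normal_of_disjoint _ _ hM hI (disjoint_iff.mpr h) m _ hm ⟨g, rfl⟩
    exact absurd ((Subgroup.map_eq_bot_iff_of_injective _ φ.injective).mp hM_bot) hne
  · exact inf_eq_right.mp h

theorem map_range_conj_eq (hcs : IsCharacteristicallySimple G)
    (hinj : Function.Injective (conj : G →* MulAut G)) (hne : Inn(G) ≠ ⊥)
    (φ : MulAut (MulAut G)) : Inn(G).map φ.toMonoidHom = Inn(G) := by
  refine le_antisymm ?_ (range_conj_le_map hcs hinj hne φ)
  rw [Subgroup.map_le_iff_le_comap, Subgroup.comap_equiv_eq_map_symm']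
  exact range_conj_le_map hcs hinj hne φ.symm

theorem exists_eq_conj_of_map_range_conj_eq (hinj : Function.Injective (conj : G →* MulAut G))
    {φ : MulAut (MulAut G)} (h : Inn(G).map φ.toMonoidHom = Inn(G)) :
    ∃ β : MulAut G, φ = conj β := by
  let β : MulAut G := (MonoidHom.ofInjective hinj).trans ((φ.subgroupMap _).trans
    ((MulEquiv.subgroupCongr h).trans (MonoidHom.ofInjective hinj).symm))
  have hβ (g : G) : conj (β g) = φ (conj g) := MonoidHom.apply_ofInjective_symm hinj _
  refine ⟨β, ?_⟩
  ext σ x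
  obtain ⟨y, rfl⟩ := β.surjective x
  suffices conj (φ σ (β y)) = conj (β (σ y)) by simpa [MulAut.conj_apply] using hinj this
  calc conj (φ σ (β y)) = φ σ * φ (conj y) * (φ σ)⁻¹ := by rw [← hβ, mul_conj_mul_inv]
    _ = φ (conj (σ y)) := by rw [← map_inv, ← map_mul, ← map_mul, mul_conj_mul_inv]
    _ = conj (β (σ y)) := (hβ _).symm

end MulAut

/-- If `G` is a characteristically simple non-abelian group, then `Aut G` is a
complete group: it has trivial center and all of its automorphisms are inner. -/
theorem stmt_11 (G : Type) [Group G]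
    (hcs : ∀ H : Subgroup G, H.Characteristic → H = ⊥ ∨ H = ⊤)
    (hna : ∃ a b : G, a * b ≠ b * a) :
    Subgroup.center (MulAut G) = ⊥ ∧
    ∀ φ : MulAut (MulAut G), ∃ α : MulAut G, φ = MulAut.conj α := by
  have hinj := MulAut.conj_injective (IsCharacteristicallySimple.center_eq_bot hcs hna)
  obtain ⟨a, b, hab⟩ := hna
  have hne := MulAut.range_conj_ne_bot hab
  exact ⟨MulAut.center_eq_bot_of_conj_injective hinj, fun φ =>
    MulAut.exists_eq_conj_of_map_range_conj_eq hinj (MulAut.map_range_conj_eq hcs hinj hne φ)⟩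
end

section
/- Let G be a group with trivial center, identified with Inn(G) ⊆ Aut(G) via c_G. If Inn(G) is a characteristic subgroup of Aut(G), then Aut(G) is complete (trivial center and all automorphisms inner); conversely, if Aut(G) is complete then Inn(G) is characteristic in Aut(G). -/
section aux
variable {G : Type} [Group G]

lemma conj_conj_aux (β : MulAut G) (g : G) :
    β * MulAut.conj g * β⁻¹ = MulAut.conj (β g) := by
  ext x
  simp [MulAut.conj_apply, mul_assoc]

lemma conj_inj_aux (h : Subgroup.center G = ⊥) :
    Function.Injective (MulAut.conj : G →* MulAut G) := by
  intro a b hab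
  have hx : ∀ x, a * x * a⁻¹ = b * x * b⁻¹ :=
    fun x => congrArg (fun f : MulAut G => f x) hab
  have hz : b⁻¹ * a ∈ Subgroup.center G := by
    rw [Subgroup.mem_center_iff]
    intro x
    calc x * (b⁻¹ * a) = b⁻¹ * (b * x * b⁻¹) * a := by group
    _ = b⁻¹ * (a * x * a⁻¹) * a := by rw [← hx x]
    _ = b⁻¹ * a * x := by group
  rw [h, Subgroup.mem_bot] at hz
  exact (inv_mul_eq_one.mp hz).symm

lemma centralizer_aux (h : Subgroup.center G = ⊥) (β : MulAut G)
    (hβ : ∀ g : G, β * MulAut.conj g * β⁻¹ = MulAut.conj g) : β = 1 := by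
  ext x
  have h1 := (conj_conj_aux β x).symm.trans (hβ x)
  have := conj_inj_aux h h1
  simpa using this

end aux

/-- For a group `G` with trivial center, `Inn G = range (c_G)` is a characteristic
subgroup of `Aut G` if and only if `Aut G` is complete (trivial center and all
automorphisms inner). -/
theorem stmt_12 (G : Type) [Group G] (h : Subgroup.center G = ⊥) :
    ((MulAut.conj : G →* MulAut G).range).Characteristic ↔
    (Subgroup.center (MulAut G) = ⊥ ∧
      ∀ φ : MulAut (MulAut G), ∃ α : MulAut G, φ = MulAut.conj α) := by
  constructor
  · intro hchar
    have hmem : ∀ (φ : MulAut (MulAut G)) (β : MulAut G),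
        β ∈ (MulAut.conj : G →* MulAut G).range ↔
        φ β ∈ (MulAut.conj : G →* MulAut G).range := by
      intro φ β
      conv_lhs => rw [← hchar.fixed φ]
      exact Subgroup.mem_comap
    constructor
    · rw [eq_bot_iff]
      intro β hβ
      rw [Subgroup.mem_bot]
      apply centralizer_aux h
      intro g
      have hc := Subgroup.mem_center_iff.mp hβ (MulAut.conj g)
      rw [← hc]; group
    · intro φ
      have hex : ∀ g : G, ∃ g' : G, MulAut.conj g' = φ (MulAut.conj g) := by
        intro g
        exact (hmem φ (MulAut.conj g)).mp ⟨g, rfl⟩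
      choose α hα using hex
      have hαmul : ∀ g g' : G, α (g * g') = α g * α g' := by
        intro g g'
        apply conj_inj_aux h
        simp only [map_mul, hα]
      have hαinj : Function.Injective α := by
        intro a b hab
        apply conj_inj_aux h
        apply φ.injective
        rw [← hα, ← hα, hab]
      have hαsurj : Function.Surjective α := by
        intro g'
        have hr : φ.symm (MulAut.conj g') ∈ (MulAut.conj : G →* MulAut G).range := by
          rw [hmem φ, MulEquiv.apply_symm_apply]
          exact ⟨g', rfl⟩
        obtain ⟨g, hg⟩ := hr
        refine ⟨g, conj_inj_aux h ?_⟩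
        show MulAut.conj (α g) = MulAut.conj g'
        rw [hα, hg, MulEquiv.apply_symm_apply]
      let αe : MulAut G := MulEquiv.ofBijective
        (MonoidHom.mk' α hαmul) ⟨hαinj, hαsurj⟩
      have hαe : ∀ g : G, αe g = α g := fun g => rfl
      refine ⟨αe, ?_⟩
      ext β
      rw [MulAut.conj_apply]
      have key : ∀ g : G, (φ β) * MulAut.conj (α g) * (φ β)⁻¹
          = (αe * β * αe⁻¹) * MulAut.conj (α g) * (αe * β * αe⁻¹)⁻¹ := by
        intro g
        rw [conj_conj_aux (αe * β * αe⁻¹) (α g)]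
        have h1 : (αe * β * αe⁻¹) (α g) = α (β g) := by
          have h2 : αe⁻¹ (α g) = g := by
            apply αe.injective
            simp [hαe g]
          show αe (β (αe⁻¹ (α g))) = α (β g)
          rw [h2, hαe]
        rw [h1, hα, ← map_inv, ← map_mul, ← map_mul, conj_conj_aux β g, hα]
      have h3 : (αe * β * αe⁻¹)⁻¹ * (φ β) = 1 := by
        apply centralizer_aux h
        intro g
        obtain ⟨g₀, rfl⟩ := hαsurj g
        have hk := key g₀
        rw [show (αe * β * αe⁻¹)⁻¹ * φ β * MulAut.conj (α g₀) * ((αe * β * αe⁻¹)⁻¹ * φ β)⁻¹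
          = (αe * β * αe⁻¹)⁻¹ * (φ β * MulAut.conj (α g₀) * (φ β)⁻¹) * (αe * β * αe⁻¹) by group]
        rw [hk]; group
      have h4 := mul_eq_one_iff_inv_eq.mp h3
      rw [← h4]; simp
  · rintro ⟨-, hinner⟩
    constructor
    intro φ
    obtain ⟨α, rfl⟩ := hinner φ
    ext β
    rw [Subgroup.mem_comap]
    constructor
    · rintro ⟨g, hg⟩
      have hg' : MulAut.conj g = MulAut.conj α β := hg
      refine ⟨α⁻¹ g, ?_⟩
      rw [← conj_conj_aux α⁻¹ g, hg', MulAut.conj_apply]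
      group
    · rintro ⟨g, hg⟩
      refine ⟨α g, ?_⟩
      show MulAut.conj (α g) = MulAut.conj α β
      rw [MulAut.conj_apply, ← hg, conj_conj_aux]
end

section
/- A group X is strong-complete (every protosplit monomorphism from X admits a unique splitting) if and only if X is proto-complete and has trivial center. -/
/-- A group `X` is strong-complete (every protosplit monomorphism with domain `X`
admits a unique splitting) if and only if `X` is proto-complete (every such
monomorphism splits) and `X` has trivial center. -/
theorem stmt_13 (X : Type) [Group X] :
    (∀ (A B : Type) [Group A] [Group B] (κ : X →* A) (α : A →* B) (β : B →* A),
        Function.Injective κ → α.comp β = MonoidHom.id B → κ.range = α.ker →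
        ∃! r : A →* X, r.comp κ = MonoidHom.id X) ↔
    ((∀ (A B : Type) [Group A] [Group B] (κ : X →* A) (α : A →* B) (β : B →* A),
        Function.Injective κ → α.comp β = MonoidHom.id B → κ.range = α.ker →
        ∃ r : A →* X, r.comp κ = MonoidHom.id X) ∧
      Subgroup.center X = ⊥) := by
  constructor
  · intro h
    refine ⟨fun A B _ _ κ α β hinj hsec hker => (h A B κ α β hinj hsec hker).exists, ?_⟩
    rw [eq_bot_iff]
    intro z hz
    have hzc : ∀ g : X, g * z = z * g := Subgroup.mem_center_iff.mp hz
    set M := Multiplicative ℤ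
    have hinj : Function.Injective (MonoidHom.inl X M) := fun a b hab => congrArg Prod.fst hab
    have hsec : (MonoidHom.snd X M).comp (MonoidHom.inr X M) = MonoidHom.id M := by
      rfl
    have hker : (MonoidHom.inl X M).range = (MonoidHom.snd X M).ker := by
      ext p
      simp only [MonoidHom.mem_ker, MonoidHom.mem_range]
      constructor
      · rintro ⟨y, rfl⟩; rfl
      · intro hp; exact ⟨p.1, Prod.ext rfl (hp.symm : (1 : M) = p.2)⟩
    obtain ⟨r, -, hu⟩ := h (X × M) M (MonoidHom.inl X M) (MonoidHom.snd X M)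
      (MonoidHom.inr X M) hinj hsec hker
    have hcomm : ∀ (x : X) (t : M), Commute ((MonoidHom.id X) x) ((zpowersHom X z) t) :=
      fun x t => (show Commute x z from hzc x).zpow_right _
    have h1 : (MonoidHom.fst X M).comp (MonoidHom.inl X M) = MonoidHom.id X := by
      ext x; rfl
    have h2 : ((MonoidHom.id X).noncommCoprod (zpowersHom X z) hcomm).comp
        (MonoidHom.inl X M) = MonoidHom.id X := by
      ext x; simp [MonoidHom.noncommCoprod]
    have heq := (hu _ h1).trans (hu _ h2).symm
    have := congrArg (fun f : X × M →* X => f (1, Multiplicative.ofAdd 1)) heq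
    simp [MonoidHom.noncommCoprod] at this
    simp [← this]
  · rintro ⟨hpc, hc⟩ A B _ _ κ α β hinj hsec hker
    obtain ⟨r, hr⟩ := hpc A B κ α β hinj hsec hker
    refine ⟨r, hr, fun r' hr' => ?_⟩
    have hrκ : ∀ x, r (κ x) = x := fun x => congrArg (fun f : X →* X => f x) hr
    have hr'κ : ∀ x, r' (κ x) = x := fun x => congrArg (fun f : X →* X => f x) hr'
    have hαβ : ∀ b, α (β b) = b := fun b => congrArg (fun f : B →* B => f b) hsec
    have key : ∀ c : B, r' (β c) = r (β c) := by
      intro c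
      have hconj : ∀ y : X, r (β c) * y * (r (β c))⁻¹ = r' (β c) * y * (r' (β c))⁻¹ := by
        intro y
        have hmem : β c * κ y * (β c)⁻¹ ∈ α.ker := by
          have hy : κ y ∈ α.ker := hker ▸ ⟨y, rfl⟩
          simp [MonoidHom.mem_ker] at hy ⊢
          simp [hy]
        rw [← hker] at hmem
        obtain ⟨w, hw⟩ := hmem
        have e1 := congrArg r hw
        have e2 := congrArg r' hw
        simp [hrκ, hr'κ] at e1 e2
        rw [← e1, ← e2]
      have hu : (r (β c))⁻¹ * r' (β c) ∈ Subgroup.center X := by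
        rw [Subgroup.mem_center_iff]
        intro g
        have := hconj g
        calc g * ((r (β c))⁻¹ * r' (β c))
            = (r (β c))⁻¹ * (r (β c) * g * (r (β c))⁻¹) * r' (β c) := by group
          _ = (r (β c))⁻¹ * (r' (β c) * g * (r' (β c))⁻¹) * r' (β c) := by rw [this]
          _ = (r (β c))⁻¹ * r' (β c) * g := by group
      rw [hc, Subgroup.mem_bot] at hu
      have : r (β c) * ((r (β c))⁻¹ * r' (β c)) = r (β c) * 1 := by rw [hu]
      simpa [mul_assoc] using this
    ext a
    have hmem : a * (β (α a))⁻¹ ∈ α.ker := by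
      simp [MonoidHom.mem_ker, hαβ]
    rw [← hker] at hmem
    obtain ⟨x, hx⟩ := hmem
    have ha : a = κ x * β (α a) := by rw [hx]; group
    rw [ha]
    simp [hrκ, hr'κ, key]
end

section
/- If X is a nontrivial group with trivial center in which every automorphism is inner, then X × X is not proto-complete: the swap automorphism of X × X is not inner, so c_{X×X} : X × X → Aut(X × X) is not surjective. -/
/-- If `X` is a nontrivial group with trivial center all of whose automorphisms
are inner, then the swap automorphism of `X × X` is not inner, and in particular
the conjugation homomorphism `c : X × X → Aut (X × X)` is not surjective. -/
theorem stmt_17 (X : Type) [Group X] [Nontrivial X]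
    (hz : Subgroup.center X = ⊥)
    (hinn : ∀ φ : MulAut X, ∃ g : X, φ = MulAut.conj g) :
    (¬ ∃ g : X × X, MulAut.conj g = (MulEquiv.prodComm : X × X ≃* X × X)) ∧
    ¬ Function.Surjective (MulAut.conj : X × X →* MulAut (X × X)) := by
  have key : ¬ ∃ g : X × X, MulAut.conj g = (MulEquiv.prodComm : X × X ≃* X × X) := by
    rintro ⟨⟨a, b⟩, h⟩
    obtain ⟨x, hx⟩ := exists_ne (1 : X)
    have := congrArg (fun φ : MulAut (X × X) => φ (x, 1)) h
    simp [MulAut.conj, Prod.ext_iff] at this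
    exact hx this.2.symm
  refine ⟨key, fun hs => key ?_⟩
  obtain ⟨g, hg⟩ := hs (MulEquiv.prodComm : X × X ≃* X × X)
  exact ⟨g, hg⟩
end

section
/- The group ℤ/2 × S₃ is not proto-complete: there exists an automorphism of ℤ/2 × S₃ of the form (a, s) ↦ (a + sgn(s), s) which is not of the form id × φ for any φ ∈ Aut(S₃), whereas if ℤ/2 × S₃ were proto-complete every automorphism would have that form. -/
/-- A group `G` is proto-complete if every monomorphism with domain `G` which is
the kernel of a split epimorphism is a split monomorphism. -/
def IsProtoComplete (G : Type) [Group G] : Prop :=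
  ∀ (A B : Type) [Group A] [Group B] (κ : G →* A) (α : A →* B) (β : B →* A),
    Function.Injective κ → α.comp β = MonoidHom.id B → κ.range = α.ker →
    ∃ r : A →* G, r.comp κ = MonoidHom.id G

namespace Stmt18Aux

abbrev Z2 := Multiplicative (ZMod 2)
abbrev S3 := Equiv.Perm (Fin 3)
abbrev G := Z2 × S3

/-- the character value `c s = if sign s = 1 then 1 else ofAdd 1`. -/
def c (s : S3) : Z2 :=
  if Equiv.Perm.sign s = 1 then 1 else Multiplicative.ofAdd (1 : ZMod 2)

lemma c_mul (s t : S3) : c (s * t) = c s * c t := by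
  unfold c
  rw [map_mul]
  rcases Int.units_eq_one_or (Equiv.Perm.sign s) with hs | hs <;>
    rcases Int.units_eq_one_or (Equiv.Perm.sign t) with ht | ht <;>
      simp [hs, ht] <;> decide

lemma c_sq (s : S3) : c s * c s = 1 := by
  unfold c; split <;> decide

/-- the automorphism θ. -/
def theta : MulAut G where
  toFun p := (p.1 * c p.2, p.2)
  invFun p := (p.1 * c p.2, p.2)
  left_inv p := by
    simp [mul_assoc, c_sq]
  right_inv p := by
    simp [mul_assoc, c_sq]
  map_mul' p q := by
    ext
    · show (p.1 * q.1) * c (p.2 * q.2) = (p.1 * c p.2) * (q.1 * c q.2)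
      rw [c_mul]
      exact (mul_mul_mul_comm p.1 (c p.2) q.1 (c q.2)).symm
    · rfl

lemma theta_apply (p : G) :
    theta p = (p.1 * (if Equiv.Perm.sign p.2 = 1 then 1 else
      Multiplicative.ofAdd (1 : ZMod 2)), p.2) := rfl

lemma theta_sq : theta * theta = 1 := by
  ext p <;> simp [theta, mul_assoc, c_sq]

/-- the action of `ℤ/2` on `G` by `θ`. -/
def psi : Z2 →* MulAut G where
  toFun z := theta ^ (Multiplicative.toAdd z).val
  map_one' := by norm_num
  map_mul' a b := by
    have h2 : theta ^ 2 = 1 := by rw [pow_two]; exact theta_sq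
    have hcases : ∀ x : ZMod 2, x = 0 ∨ x = 1 := by decide
    rcases hcases (Multiplicative.toAdd a) with ha | ha <;>
      rcases hcases (Multiplicative.toAdd b) with hb | hb <;>
        simp only [toAdd_mul, ha, hb] <;> norm_num
    rw [show (ZMod.val (2 : ZMod 2)) = 0 from rfl, show (ZMod.val (1 : ZMod 2)) = 1 from rfl,
      pow_zero, pow_one, ← pow_two, h2]

lemma psi_ofAdd_one : psi (Multiplicative.ofAdd (1 : ZMod 2)) = theta := by
  show theta ^ (Multiplicative.toAdd (Multiplicative.ofAdd (1 : ZMod 2))).val = theta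
  rw [show (Multiplicative.toAdd (Multiplicative.ofAdd (1 : ZMod 2))).val = 1 from rfl, pow_one]

/-- The swap `(0 1)` in `S₃`. -/
def sigma : S3 := Equiv.swap 0 1

lemma sign_sigma : Equiv.Perm.sign sigma = -1 := by
  simp [sigma, Equiv.Perm.sign_swap (by decide : (0 : Fin 3) ≠ 1)]

lemma theta_not_inner : ¬ ∃ x : G, ∀ g : G, x * g * x⁻¹ = theta g := by
  rintro ⟨x, hx⟩
  have h := congrArg Prod.fst (hx (1, sigma))
  simp [theta, c, sign_sigma, mul_comm] at h
  exact absurd h (by decide)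

end Stmt18Aux

/-- `ℤ/2 × S₃` is not proto-complete: the automorphism `(a, s) ↦ (a + sgn s, s)`
is not of the form `id × φ` for any automorphism `φ` of `S₃`. -/
theorem stmt_18 :
    (∃ θ : MulAut (Multiplicative (ZMod 2) × Equiv.Perm (Fin 3)),
      (∀ p : Multiplicative (ZMod 2) × Equiv.Perm (Fin 3),
        θ p = (p.1 * (if Equiv.Perm.sign p.2 = 1 then 1 else
          Multiplicative.ofAdd (1 : ZMod 2)), p.2)) ∧
      ¬ ∃ φ : MulAut (Equiv.Perm (Fin 3)),
        ∀ p : Multiplicative (ZMod 2) × Equiv.Perm (Fin 3), θ p = (p.1, φ p.2)) ∧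
    ¬ IsProtoComplete (Multiplicative (ZMod 2) × Equiv.Perm (Fin 3)) := by
  open Stmt18Aux in
  refine ⟨⟨theta, theta_apply, ?_⟩, ?_⟩
  · rintro ⟨φ, hφ⟩
    have h := congrArg Prod.fst (hφ (1, sigma))
    rw [theta_apply] at h
    simp [sign_sigma] at h
  · intro hpc
    obtain ⟨r, hr⟩ := hpc (SemidirectProduct G Z2 psi) Z2
      SemidirectProduct.inl SemidirectProduct.rightHom SemidirectProduct.inr
      SemidirectProduct.inl_injective SemidirectProduct.rightHom_comp_inr
      SemidirectProduct.range_inl_eq_ker_rightHom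
    apply theta_not_inner
    refine ⟨r (SemidirectProduct.inr (Multiplicative.ofAdd (1 : ZMod 2))), fun g => ?_⟩
    have key : SemidirectProduct.inr (φ := psi) (Multiplicative.ofAdd (1 : ZMod 2)) *
        SemidirectProduct.inl g *
        (SemidirectProduct.inr (Multiplicative.ofAdd (1 : ZMod 2)))⁻¹ =
        SemidirectProduct.inl (theta g) := by
      rw [← psi_ofAdd_one, SemidirectProduct.inl_aut, map_inv]
    have hrinl : ∀ g : G, r (SemidirectProduct.inl g) = g := fun g =>
      congrFun (congrArg DFunLike.coe hr) g
    calc r (SemidirectProduct.inr (Multiplicative.ofAdd (1 : ZMod 2))) * g *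
          (r (SemidirectProduct.inr (Multiplicative.ofAdd (1 : ZMod 2))))⁻¹
        = r (SemidirectProduct.inr (Multiplicative.ofAdd (1 : ZMod 2)) *
            SemidirectProduct.inl g *
            (SemidirectProduct.inr (Multiplicative.ofAdd (1 : ZMod 2)))⁻¹) := by
          rw [map_mul, map_mul, map_inv, hrinl]
      _ = theta g := by rw [key, hrinl]
end
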